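/- arXiv:2405.15175 — 2 statements merged into one kernel-verified Lean document; each statement's English description precedes it below -/
import Mathlib

section
/- On a flat n-manifold (n ≥ 3) with connection ∇, if a skew-symmetric tensor β^{bc} satisfies tf(∇_a β^{bc}) = 0, then defining ν^c = (1/(n−1))∇_d β^{dc} and ρ = (1/(n−2))∇_b ν^b, the triple (β, ν, ρ) satisfies the closed system: ∇_a β^{bc} = δ_a^b ν^c − δ_a^c ν^b, ∇_a ν^b = δ_a^b ρ, and ∇_a ρ = 0. -/
/-- The coordinate (flat-connection) derivative `∇_a f = ∂f/∂x^a` on `ℝⁿ`. -/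
noncomputable def pd {n : ℕ} (f : (Fin n → ℝ) → ℝ) (x : Fin n → ℝ) (a : Fin n) : ℝ :=
  fderiv ℝ f x (Pi.single a 1)



lemma pd_congr {n : ℕ} {f g : (Fin n → ℝ) → ℝ} (h : ∀ y, f y = g y) (x : Fin n → ℝ)
    (a : Fin n) : pd f x a = pd g x a := by
  have : f = g := funext h
  rw [pd, pd, this]

lemma pd_neg {n : ℕ} (f : (Fin n → ℝ) → ℝ) (x : Fin n → ℝ) (a : Fin n) :
    pd (fun y => -f y) x a = - pd f x a := by
  rw [pd, pd, fderiv_fun_neg]; simp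

lemma pd_const {n : ℕ} (c : ℝ) (x : Fin n → ℝ) (a : Fin n) :
    pd (fun _ => c) x a = 0 := by
  rw [pd, fderiv_fun_const]; simp

lemma pd_sub {n : ℕ} {f g : (Fin n → ℝ) → ℝ} {x : Fin n → ℝ} (hf : DifferentiableAt ℝ f x)
    (hg : DifferentiableAt ℝ g x) (a : Fin n) :
    pd (fun y => f y - g y) x a = pd f x a - pd g x a := by
  rw [pd, pd, pd, fderiv_fun_sub hf hg]; simp

lemma pd_const_mul {n : ℕ} {f : (Fin n → ℝ) → ℝ} {x : Fin n → ℝ} (hf : DifferentiableAt ℝ f x) (c : ℝ)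
    (a : Fin n) : pd (fun y => c * f y) x a = c * pd f x a := by
  rw [pd, pd, fderiv_const_mul hf]; simp

lemma pd_sum {n : ℕ} {ι : Type*} (s : Finset ι) {f : ι → (Fin n → ℝ) → ℝ} {x : Fin n → ℝ}
    (hf : ∀ i ∈ s, DifferentiableAt ℝ (f i) x) (a : Fin n) :
    pd (fun y => ∑ i ∈ s, f i y) x a = ∑ i ∈ s, pd (f i) x a := by
  rw [pd, fderiv_fun_sum hf]; simp [pd]

lemma pd_swap {n : ℕ} {f : (Fin n → ℝ) → ℝ} (hf : ContDiff ℝ (⊤ : ℕ∞) f) (x : Fin n → ℝ)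
    (i j : Fin n) : pd (fun y => pd f y i) x j = pd (fun y => pd f y j) x i := by
  have hdf : Differentiable ℝ (fderiv ℝ f) := (hf.fderiv_right (m := 1) (WithTop.coe_le_coe.mpr le_top)).differentiable one_ne_zero
  have key : ∀ v w : Fin n → ℝ, fderiv ℝ (fun y => fderiv ℝ f y v) x w
      = fderiv ℝ (fderiv ℝ f) x w v := by
    intro v w
    rw [fderiv_clm_apply (hdf x) (differentiableAt_const v)]
    simp
  simp only [pd]
  rw [key, key]
  exact (hf.contDiffAt.isSymmSndFDerivAt (by rw [minSmoothness_of_isRCLikeNormedField]; exact WithTop.coe_le_coe.mpr le_top)) _ _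

/-- On flat `ℝⁿ` (`n ≥ 3`) with the coordinate connection `∇ = pd`, if a
smooth skew-symmetric tensor `β^{bc}` satisfies `tf(∇_a β^{bc}) = 0` (the trace part of
`∇_a β^{bc}` being `(1/(n−1))(δ_a^b ∇_d β^{dc} + δ_a^c ∇_d β^{bd})`), then, defining
`ν^c = (1/(n−1)) ∇_d β^{dc}` and `ρ = (1/(n−2)) ∇_b ν^b`, the triple `(β, ν, ρ)`
satisfies the closed system `∇_a β^{bc} = δ_a^b ν^c − δ_a^c ν^b`, `∇_a ν^b = δ_a^b ρ`,
and `∇_a ρ = 0`. -/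
theorem stmt_12 (n : ℕ) (hn : 3 ≤ n)
    (β : (Fin n → ℝ) → Fin n → Fin n → ℝ)
    (hsmooth : ∀ b c, ContDiff ℝ (⊤ : ℕ∞) fun x => β x b c)
    (hskew : ∀ x b c, β x b c = - β x c b)
    (ν : (Fin n → ℝ) → Fin n → ℝ)
    (hν : ∀ x c, ν x c = (1 / (n - 1)) * ∑ d, pd (fun y => β y d c) x d)
    (ρ : (Fin n → ℝ) → ℝ)
    (hρ : ∀ x, ρ x = (1 / (n - 2)) * ∑ b, pd (fun y => ν y b) x b)
    (htf : ∀ x a b c, pd (fun y => β y b c) x a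
        - (1 / (n - 1)) * ((if a = b then ∑ d, pd (fun y => β y d c) x d else 0)
          + (if a = c then ∑ d, pd (fun y => β y b d) x d else 0)) = 0) :
    ∀ x a b c,
      (pd (fun y => β y b c) x a
          = (if a = b then ν x c else 0) - (if a = c then ν x b else 0))
      ∧ (pd (fun y => ν y b) x a = if a = b then ρ x else 0)
      ∧ pd (fun y => ρ y) x a = 0 := by
  have hn3 : (3 : ℝ) ≤ (n : ℝ) := by exact_mod_cast hn
  have hn1 : (n : ℝ) - 1 ≠ 0 := by linarith
  have hn2 : (n : ℝ) - 2 ≠ 0 := by linarith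
  have hpdβ : ∀ b c e, ContDiff ℝ (⊤ : ℕ∞) (fun x => pd (fun y => β y b c) x e) := by
    intro b c e
    exact ((hsmooth b c).fderiv_right (by simp)).clm_apply contDiff_const
  have hpdβd : ∀ (b c e : Fin n) (x : Fin n → ℝ),
      DifferentiableAt ℝ (fun y => pd (fun z => β z b c) y e) x :=
    fun b c e x => ((hpdβ b c e).differentiable (by simp)) x
  have hνs : ∀ b, ContDiff ℝ (⊤ : ℕ∞) (fun x => ν x b) := by
    intro b
    have h : (fun x => ν x b) = fun x => (1 / ((n : ℝ) - 1)) * ∑ d, pd (fun y => β y d b) x d :=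
      funext fun x => hν x b
    rw [h]
    exact contDiff_const.mul (ContDiff.sum fun d _ => hpdβ d b d)
  have hνd : ∀ (b : Fin n) (x : Fin n → ℝ), DifferentiableAt ℝ (fun y => ν y b) x :=
    fun b x => ((hνs b).differentiable (by simp)) x
  -- Part 1
  have key1 : ∀ x a b c, pd (fun y => β y b c) x a
      = (if a = b then ν x c else 0) - (if a = c then ν x b else 0) := by
    intro x a b c
    have h := htf x a b c
    have hT : ∑ d, pd (fun y => β y b d) x d = - ∑ d, pd (fun y => β y d b) x d := by
      rw [← Finset.sum_neg_distrib]
      refine Finset.sum_congr rfl fun d _ => ?_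
      rw [← pd_neg]
      exact pd_congr (fun y => hskew y b d) x d
    rw [hT] at h
    rw [hν x c, hν x b]
    split_ifs at h ⊢ <;> linarith
  -- Part 2 computation: (n-2) * ∇_a ν^b = - δ_a^b * ∑_d ∇_d ν^d
  have key2 : ∀ x a b, ((n : ℝ) - 2) * pd (fun y => ν y b) x a
      = - (if a = b then ∑ d, pd (fun y => ν y d) x d else 0) := by
    intro x a b
    have e1 : pd (fun y => ν y b) x a
        = (1 / ((n : ℝ) - 1)) * ∑ d, pd (fun y => pd (fun z => β z d b) y d) x a := by
      rw [pd_congr (fun y => hν y b) x a,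
        pd_const_mul (DifferentiableAt.fun_sum fun d _ => hpdβd d b d x),
        pd_sum _ (fun d _ => hpdβd d b d x)]
    have e1' : ((n : ℝ) - 1) * pd (fun y => ν y b) x a
        = ∑ d, pd (fun y => pd (fun z => β z d b) y d) x a := by
      rw [e1, ← mul_assoc, mul_one_div_cancel hn1, one_mul]
    have e2 : ∀ d : Fin n, pd (fun y => pd (fun z => β z d b) y d) x a
        = (if a = d then pd (fun y => ν y b) x d else 0)
          - (if a = b then pd (fun y => ν y d) x d else 0) := by
      intro d
      rw [pd_swap (hsmooth d b) x d a]
      by_cases had : a = d <;> by_cases hab : a = b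
      · rw [pd_congr (g := fun y => ν y b - ν y d) (fun y => by
          show pd (fun z => β z d b) y a = _
          rw [key1 y a d b, if_pos had, if_pos hab]) x d,
          pd_sub (hνd b x) (hνd d x), if_pos had, if_pos hab]
      · rw [pd_congr (g := fun y => ν y b) (fun y => by
          show pd (fun z => β z d b) y a = _
          rw [key1 y a d b, if_pos had, if_neg hab, sub_zero]) x d,
          if_pos had, if_neg hab, sub_zero]
      · rw [pd_congr (g := fun y => -(ν y d)) (fun y => by
          show pd (fun z => β z d b) y a = _
          rw [key1 y a d b, if_neg had, if_pos hab, zero_sub]) x d,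
          pd_neg, if_neg had, if_pos hab, zero_sub]
      · rw [pd_congr (g := fun _ => (0 : ℝ)) (fun y => by
          show pd (fun z => β z d b) y a = _
          rw [key1 y a d b, if_neg had, if_neg hab, sub_zero]) x d,
          pd_const, if_neg had, if_neg hab, sub_zero]
    have e3 : ∑ d, pd (fun y => pd (fun z => β z d b) y d) x a
        = pd (fun y => ν y b) x a
          - (if a = b then ∑ d, pd (fun y => ν y d) x d else 0) := by
      rw [Finset.sum_congr rfl fun d _ => e2 d, Finset.sum_sub_distrib,
        Finset.sum_ite_eq Finset.univ a (fun d => pd (fun y => ν y b) x d)]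
      simp only [Finset.mem_univ, if_true]
      congr 1
      by_cases hab : a = b <;> simp [hab]
    rw [e3] at e1'
    linear_combination e1'
  -- The divergence of ν vanishes identically
  have keyD : ∀ x, ∑ d, pd (fun y => ν y d) x d = 0 := by
    intro x
    have hsum : ∑ a : Fin n, ((n : ℝ) - 2) * pd (fun y => ν y a) x a
        = ∑ a : Fin n, - (∑ d, pd (fun y => ν y d) x d) := by
      refine Finset.sum_congr rfl fun a _ => ?_
      rw [key2 x a a, if_pos rfl]
    rw [← Finset.mul_sum, Finset.sum_const, Finset.card_univ, Fintype.card_fin,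
      nsmul_eq_mul] at hsum
    have h2 : ((2 : ℝ) * n - 2) * (∑ d, pd (fun y => ν y d) x d) = 0 := by
      linear_combination hsum
    rcases mul_eq_zero.mp h2 with h | h
    · exfalso; linarith
    · exact h
  have hρ0 : ∀ x, ρ x = 0 := by
    intro x
    rw [hρ x, keyD x, mul_zero]
  intro x a b c
  refine ⟨key1 x a b c, ?_, ?_⟩
  · have h3 : ((n : ℝ) - 2) * pd (fun y => ν y b) x a = 0 := by
      rw [key2 x a b, keyD x]
      simp
    have hA : pd (fun y => ν y b) x a = 0 := by
      rcases mul_eq_zero.mp h3 with h | h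
      · exact absurd h hn2
      · exact h
    rw [hA, hρ0 x]
    simp
  · rw [pd_congr (g := fun _ => (0 : ℝ)) (fun y => hρ0 y) x a, pd_const]
end

section
/- Let (M,g) be a pseudo-Riemannian n-manifold (n ≥ 2) with Levi-Civita connection ∇. The prolongation connection of the metrisability equation agrees with the projective tractor connection on the section (g^{bc}, ν^c, ρ) determined by t^{bc} = g^{bc} if and only if g is Einstein. -/
namespace Stmt18

/-- Coordinate partial derivative `∂_a f` on the chart `ℝⁿ`. -/
noncomputable def pd {n : ℕ} (f : (Fin n → ℝ) → ℝ) (x : Fin n → ℝ) (a : Fin n) : ℝ :=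
  fderiv ℝ f x (Pi.single a 1)

/-- Christoffel symbols `Γ^c_{ab}` of the Levi-Civita connection of `g`. -/
noncomputable def christoffel (n : ℕ) (g ginv : (Fin n → ℝ) → Fin n → Fin n → ℝ)
    (x : Fin n → ℝ) (c a b : Fin n) : ℝ :=
  (1 / 2) * ∑ d, ginv x c d *
    (pd (fun y => g y d a) x b + pd (fun y => g y d b) x a - pd (fun y => g y a b) x d)

/-- Riemann curvature `R_{ab}{}^c{}_d` of the Levi-Civita connection of `g`. -/
noncomputable def riem (n : ℕ) (g ginv : (Fin n → ℝ) → Fin n → Fin n → ℝ)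
    (x : Fin n → ℝ) (a b c d : Fin n) : ℝ :=
  pd (fun y => christoffel n g ginv y c b d) x a
    - pd (fun y => christoffel n g ginv y c a d) x b
    + ∑ e, christoffel n g ginv x c a e * christoffel n g ginv x e b d
    - ∑ e, christoffel n g ginv x c b e * christoffel n g ginv x e a d

/-- Ricci tensor `R_{ab} = R_{ca}{}^c{}_b`. -/
noncomputable def ricci (n : ℕ) (g ginv : (Fin n → ℝ) → Fin n → Fin n → ℝ)
    (x : Fin n → ℝ) (a b : Fin n) : ℝ :=
  ∑ c, riem n g ginv x c a c b

/-- Projective Schouten tensor `P_{ab} = R_{ab}/(n−1)`. -/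
noncomputable def schouten (n : ℕ) (g ginv : (Fin n → ℝ) → Fin n → Fin n → ℝ)
    (x : Fin n → ℝ) (a b : Fin n) : ℝ :=
  ricci n g ginv x a b / (n - 1)

/-- Projective Weyl tensor `W_{ab}{}^c{}_d = R_{ab}{}^c{}_d − δ_a^c P_{bd} + δ_b^c P_{ad}`. -/
noncomputable def weyl (n : ℕ) (g ginv : (Fin n → ℝ) → Fin n → Fin n → ℝ)
    (x : Fin n → ℝ) (a b c d : Fin n) : ℝ :=
  riem n g ginv x a b c d - (if a = c then schouten n g ginv x b d else 0)
    + (if b = c then schouten n g ginv x a d else 0)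

/-- Covariant derivative `∇_a P_{bc}` of the Schouten tensor. -/
noncomputable def covDSchouten (n : ℕ) (g ginv : (Fin n → ℝ) → Fin n → Fin n → ℝ)
    (x : Fin n → ℝ) (a b c : Fin n) : ℝ :=
  pd (fun y => schouten n g ginv y b c) x a
    - ∑ e, christoffel n g ginv x e a b * schouten n g ginv x e c
    - ∑ e, christoffel n g ginv x e a c * schouten n g ginv x b e

/-- Projective Cotton tensor `C_{abc} = ∇_a P_{bc} − ∇_b P_{ac}`. -/
noncomputable def cotton (n : ℕ) (g ginv : (Fin n → ℝ) → Fin n → Fin n → ℝ)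
    (x : Fin n → ℝ) (a b c : Fin n) : ℝ :=
  covDSchouten n g ginv x a b c - covDSchouten n g ginv x b a c

/-! ### Toolkit for `pd` -/

section Toolkit
variable {n : ℕ} {x : Fin n → ℝ}

theorem pd_congr {f f' : (Fin n → ℝ) → ℝ} (h : ∀ y, f y = f' y) (x : Fin n → ℝ) (a : Fin n) :
    pd f x a = pd f' x a := by
  have : f = f' := funext h
  rw [this]

theorem contDiff_pd {f : (Fin n → ℝ) → ℝ} (hf : ContDiff ℝ (⊤ : ℕ∞) f) (a : Fin n) :
    ContDiff ℝ (⊤ : ℕ∞) fun x => pd f x a :=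
  (hf.fderiv_right (by simp)).clm_apply contDiff_const

theorem pd_add {f g : (Fin n → ℝ) → ℝ} (hf : DifferentiableAt ℝ f x) (hg : DifferentiableAt ℝ g x)
    (a : Fin n) : pd (fun y => f y + g y) x a = pd f x a + pd g x a := by
  unfold pd; rw [fderiv_fun_add hf hg]; rfl

theorem pd_sub {f g : (Fin n → ℝ) → ℝ} (hf : DifferentiableAt ℝ f x) (hg : DifferentiableAt ℝ g x)
    (a : Fin n) : pd (fun y => f y - g y) x a = pd f x a - pd g x a := by
  unfold pd; rw [fderiv_fun_sub hf hg]; rfl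

theorem pd_mul {f g : (Fin n → ℝ) → ℝ} (hf : DifferentiableAt ℝ f x) (hg : DifferentiableAt ℝ g x)
    (a : Fin n) : pd (fun y => f y * g y) x a = pd f x a * g x + f x * pd g x a := by
  unfold pd; rw [fderiv_fun_mul hf hg]; simp; ring

theorem pd_const_mul {f : (Fin n → ℝ) → ℝ} (hf : DifferentiableAt ℝ f x) (c : ℝ)
    (a : Fin n) : pd (fun y => c * f y) x a = c * pd f x a := by
  unfold pd; rw [fderiv_const_mul hf]; simp

theorem pd_const (c : ℝ) (a : Fin n) : pd (fun _ : Fin n → ℝ => c) x a = 0 := by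
  unfold pd; rw [fderiv_fun_const]; simp

theorem pd_sum {ι : Type*} {s : Finset ι} {f : ι → (Fin n → ℝ) → ℝ}
    (hf : ∀ i ∈ s, DifferentiableAt ℝ (f i) x)
    (a : Fin n) : pd (fun y => ∑ i ∈ s, f i y) x a = ∑ i ∈ s, pd (f i) x a := by
  unfold pd; rw [fderiv_fun_sum hf]; simp

theorem pd_comm {f : (Fin n → ℝ) → ℝ} (hf : ContDiff ℝ (⊤ : ℕ∞) f) (x : Fin n → ℝ) (a b : Fin n) :
    pd (fun y => pd f y b) x a = pd (fun y => pd f y a) x b := by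
  have hdf : ContDiff ℝ (⊤ : ℕ∞) (fderiv ℝ f) := hf.fderiv_right (by simp)
  have h1 : ∀ v : Fin n → ℝ, fderiv ℝ (fun y => fderiv ℝ f y v) x
      = (fderiv ℝ (fderiv ℝ f) x).flip v := by
    intro v
    have := fderiv_clm_apply (x := x) (c := fderiv ℝ f) (u := fun _ => v)
      (hdf.differentiable (by simp)).differentiableAt (differentiableAt_const v)
    simpa using this
  have hsymm := second_derivative_symmetric (f' := fderiv ℝ f)
    (f'' := fderiv ℝ (fderiv ℝ f) x) (x := x)
    (fun y => ((hf.differentiable (by simp)) y).hasFDerivAt)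
    ((hdf.differentiable (by simp)) x).hasFDerivAt
  unfold pd
  rw [h1, h1]
  exact hsymm _ _

end Toolkit

/-! ### Lowered Christoffel symbols and curvature -/

/-- Lowered Christoffel symbols `Γ_{cab} = (1/2)(∂_b g_{ca} + ∂_a g_{cb} − ∂_c g_{ab})`. -/
noncomputable def gammaL (n : ℕ) (g : (Fin n → ℝ) → Fin n → Fin n → ℝ)
    (x : Fin n → ℝ) (c a b : Fin n) : ℝ :=
  (1 / 2) * (pd (fun y => g y c a) x b + pd (fun y => g y c b) x a - pd (fun y => g y a b) x c)

/-- Lowered Riemann tensor (as an explicit formula). -/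
noncomputable def rl (n : ℕ) (g ginv : (Fin n → ℝ) → Fin n → Fin n → ℝ)
    (x : Fin n → ℝ) (a b c d : Fin n) : ℝ :=
  pd (fun y => gammaL n g y c b d) x a - pd (fun y => gammaL n g y c a d) x b
    - ∑ e, gammaL n g x e a c * christoffel n g ginv x e b d
    + ∑ e, gammaL n g x e b c * christoffel n g ginv x e a d

section Main
variable {n : ℕ} {g ginv : (Fin n → ℝ) → Fin n → Fin n → ℝ}

theorem christoffel_eq (x : Fin n → ℝ) (c a b : Fin n) :
    christoffel n g ginv x c a b = ∑ d, ginv x c d * gammaL n g x d a b := by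
  unfold christoffel gammaL
  rw [Finset.mul_sum]
  refine Finset.sum_congr rfl fun d _ => by ring

section Smooth
variable (hgsmooth : ∀ b c, ContDiff ℝ (⊤ : ℕ∞) fun x => g x b c)
variable (hginvsmooth : ∀ b c, ContDiff ℝ (⊤ : ℕ∞) fun x => ginv x b c)
set_option linter.unusedSectionVars false
include hgsmooth hginvsmooth

theorem contDiff_gammaL (c a b : Fin n) :
    ContDiff ℝ (⊤ : ℕ∞) fun x => gammaL n g x c a b :=
  contDiff_const.mul (((contDiff_pd (hgsmooth c a) b).add
    (contDiff_pd (hgsmooth c b) a)).sub (contDiff_pd (hgsmooth a b) c))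

theorem contDiff_christoffel (c a b : Fin n) :
    ContDiff ℝ (⊤ : ℕ∞) fun x => christoffel n g ginv x c a b := by
  have : (fun x => christoffel n g ginv x c a b)
      = fun x => ∑ d, ginv x c d * gammaL n g x d a b := funext fun x => christoffel_eq x c a b
  rw [this]
  exact ContDiff.sum fun d _ => (hginvsmooth c d).mul (contDiff_gammaL hgsmooth hginvsmooth d a b)

theorem contDiff_riem (a b c d : Fin n) :
    ContDiff ℝ (⊤ : ℕ∞) fun x => riem n g ginv x a b c d := by
  unfold riem
  exact (((contDiff_pd (contDiff_christoffel hgsmooth hginvsmooth c b d) a).sub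
    (contDiff_pd (contDiff_christoffel hgsmooth hginvsmooth c a d) b)).add
    (ContDiff.sum fun e _ => (contDiff_christoffel hgsmooth hginvsmooth c a e).mul
      (contDiff_christoffel hgsmooth hginvsmooth e b d))).sub
    (ContDiff.sum fun e _ => (contDiff_christoffel hgsmooth hginvsmooth c b e).mul
      (contDiff_christoffel hgsmooth hginvsmooth e a d))

theorem contDiff_ricci (a b : Fin n) :
    ContDiff ℝ (⊤ : ℕ∞) fun x => ricci n g ginv x a b := by
  unfold ricci
  exact ContDiff.sum fun c _ => contDiff_riem hgsmooth hginvsmooth c a c b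

end Smooth


section Alg
variable (hgsmooth : ∀ b c, ContDiff ℝ (⊤ : ℕ∞) fun x => g x b c)
variable (hginvsmooth : ∀ b c, ContDiff ℝ (⊤ : ℕ∞) fun x => ginv x b c)
variable (hgsym : ∀ x a b, g x a b = g x b a)
variable (hginvsym : ∀ x a b, ginv x a b = ginv x b a)
variable (hinv : ∀ x a c, (∑ b, ginv x a b * g x b c) = if a = c then (1:ℝ) else 0)
variable (hinv' : ∀ x a c, (∑ b, g x a b * ginv x b c) = if a = c then (1:ℝ) else 0)
set_option linter.unusedSectionVars false

include hgsym in
theorem gammaL_symm (x : Fin n → ℝ) (c a b : Fin n) :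
    gammaL n g x c a b = gammaL n g x c b a := by
  unfold gammaL
  rw [pd_congr (fun y => hgsym y a b) x c]
  ring

include hgsym in
theorem christoffel_symm (x : Fin n → ℝ) (c a b : Fin n) :
    christoffel n g ginv x c a b = christoffel n g ginv x c b a := by
  rw [christoffel_eq, christoffel_eq]
  exact Finset.sum_congr rfl fun d _ => by rw [gammaL_symm hgsym]

include hinv' in
theorem contract1 (x : Fin n → ℝ) (c : Fin n) (F : Fin n → ℝ) :
    ∑ e, g x c e * ∑ f, ginv x e f * F f = F c := by
  calc ∑ e, g x c e * ∑ f, ginv x e f * F f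
      = ∑ e, ∑ f, g x c e * ginv x e f * F f := by
        refine Finset.sum_congr rfl fun e _ => ?_
        rw [Finset.mul_sum]
        exact Finset.sum_congr rfl fun f _ => by ring
    _ = ∑ f, ∑ e, g x c e * ginv x e f * F f := Finset.sum_comm
    _ = ∑ f, (∑ e, g x c e * ginv x e f) * F f := by
        exact Finset.sum_congr rfl fun f _ => (Finset.sum_mul _ _ _).symm
    _ = ∑ f, (if c = f then (1:ℝ) else 0) * F f := by
        exact Finset.sum_congr rfl fun f _ => by rw [hinv' x c f]
    _ = F c := by simp

include hinv in
theorem contract2 (x : Fin n → ℝ) (c : Fin n) (F : Fin n → ℝ) :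
    ∑ e, ginv x c e * ∑ f, g x e f * F f = F c := by
  calc ∑ e, ginv x c e * ∑ f, g x e f * F f
      = ∑ e, ∑ f, ginv x c e * g x e f * F f := by
        refine Finset.sum_congr rfl fun e _ => ?_
        rw [Finset.mul_sum]
        exact Finset.sum_congr rfl fun f _ => by ring
    _ = ∑ f, ∑ e, ginv x c e * g x e f * F f := Finset.sum_comm
    _ = ∑ f, (∑ e, ginv x c e * g x e f) * F f := by
        exact Finset.sum_congr rfl fun f _ => (Finset.sum_mul _ _ _).symm
    _ = ∑ f, (if c = f then (1:ℝ) else 0) * F f := by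
        exact Finset.sum_congr rfl fun f _ => by rw [hinv x c f]
    _ = F c := by simp

include hinv' in
theorem lower_chr (x : Fin n → ℝ) (c a b : Fin n) :
    ∑ e, g x c e * christoffel n g ginv x e a b = gammaL n g x c a b := by
  calc ∑ e, g x c e * christoffel n g ginv x e a b
      = ∑ e, g x c e * ∑ f, ginv x e f * gammaL n g x f a b := by
        exact Finset.sum_congr rfl fun e _ => by rw [christoffel_eq]
    _ = gammaL n g x c a b := contract1 hinv' x c _

include hgsym in
theorem compat (x : Fin n → ℝ) (a b c : Fin n) :
    pd (fun y => g y b c) x a = gammaL n g x b a c + gammaL n g x c a b := by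
  unfold gammaL
  rw [pd_congr (fun y => hgsym y b a) x c, pd_congr (fun y => hgsym y c a) x b,
    pd_congr (fun y => hgsym y c b) x a]
  ring

include hginvsym in
theorem quad_pairsym (x : Fin n → ℝ) (p q r s : Fin n) :
    ∑ e, gammaL n g x e p q * christoffel n g ginv x e r s
      = ∑ e, gammaL n g x e r s * christoffel n g ginv x e p q := by
  calc ∑ e, gammaL n g x e p q * christoffel n g ginv x e r s
      = ∑ e, ∑ f, ginv x e f * (gammaL n g x e p q * gammaL n g x f r s) := by
        refine Finset.sum_congr rfl fun e _ => ?_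
        rw [christoffel_eq, Finset.mul_sum]
        exact Finset.sum_congr rfl fun f _ => by ring
    _ = ∑ f, ∑ e, ginv x e f * (gammaL n g x e p q * gammaL n g x f r s) := Finset.sum_comm
    _ = ∑ f, ∑ e, ginv x f e * (gammaL n g x f r s * gammaL n g x e p q) := by
        refine Finset.sum_congr rfl fun f _ => Finset.sum_congr rfl fun e _ => ?_
        rw [hginvsym x e f]; ring
    _ = ∑ e, gammaL n g x e r s * christoffel n g ginv x e p q := by
        refine Finset.sum_congr rfl fun f _ => ?_
        rw [christoffel_eq, Finset.mul_sum]
        exact Finset.sum_congr rfl fun e _ => by ring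

include hgsmooth hginvsmooth hgsym hinv' in
theorem lower_riem (x : Fin n → ℝ) (a b c d : Fin n) :
    ∑ e, g x c e * riem n g ginv x a b e d = rl n g ginv x a b c d := by
  have hgd : ∀ (p q : Fin n) (y : Fin n → ℝ), DifferentiableAt ℝ (fun z => g z p q) y :=
    fun p q y => ((hgsmooth p q).differentiable (by simp)).differentiableAt
  have hcd : ∀ (e p q : Fin n) (y : Fin n → ℝ),
      DifferentiableAt ℝ (fun z => christoffel n g ginv z e p q) y :=
    fun e p q y =>
      ((contDiff_christoffel hgsmooth hginvsmooth e p q).differentiable (by simp)).differentiableAt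
  -- derivative of the lowered Christoffel symbol
  have key : ∀ (w p q : Fin n),
      ∑ e, g x c e * pd (fun y => christoffel n g ginv y e p q) x w
        = pd (fun y => gammaL n g y c p q) x w
          - ∑ e, (gammaL n g x c w e + gammaL n g x e w c)
              * christoffel n g ginv x e p q := by
    intro w p q
    have hprod : pd (fun y => ∑ e, g y c e * christoffel n g ginv y e p q) x w
        = ∑ e, (pd (fun y => g y c e) x w * christoffel n g ginv x e p q
            + g x c e * pd (fun y => christoffel n g ginv y e p q) x w) := by
      rw [pd_sum (fun e _ => (hgd c e x).fun_mul (hcd e p q x)) w]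
      exact Finset.sum_congr rfl fun e _ => pd_mul (hgd c e x) (hcd e p q x) w
    have hlhs : pd (fun y => ∑ e, g y c e * christoffel n g ginv y e p q) x w
        = pd (fun y => gammaL n g y c p q) x w :=
      pd_congr (fun y => lower_chr hinv' y c p q) x w
    rw [hlhs, Finset.sum_add_distrib] at hprod
    have hterm : ∑ e, pd (fun y => g y c e) x w * christoffel n g ginv x e p q
        = ∑ e, (gammaL n g x c w e + gammaL n g x e w c) * christoffel n g ginv x e p q :=
      Finset.sum_congr rfl fun e _ => by rw [compat hgsym x w c e]
    rw [hterm] at hprod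
    linarith [hprod]
  have hquad : ∀ (a' b' : Fin n),
      ∑ e, g x c e * ∑ f, christoffel n g ginv x e a' f * christoffel n g ginv x f b' d
        = ∑ f, gammaL n g x c a' f * christoffel n g ginv x f b' d := by
    intro a' b'
    calc ∑ e, g x c e * ∑ f, christoffel n g ginv x e a' f * christoffel n g ginv x f b' d
        = ∑ e, ∑ f, g x c e * christoffel n g ginv x e a' f
            * christoffel n g ginv x f b' d := by
          refine Finset.sum_congr rfl fun e _ => ?_
          rw [Finset.mul_sum]
          exact Finset.sum_congr rfl fun f _ => by ring
      _ = ∑ f, ∑ e, g x c e * christoffel n g ginv x e a' f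
            * christoffel n g ginv x f b' d := Finset.sum_comm
      _ = ∑ f, (∑ e, g x c e * christoffel n g ginv x e a' f)
            * christoffel n g ginv x f b' d := by
          exact Finset.sum_congr rfl fun f _ => (Finset.sum_mul _ _ _).symm
      _ = ∑ f, gammaL n g x c a' f * christoffel n g ginv x f b' d := by
          exact Finset.sum_congr rfl fun f _ => by rw [lower_chr hinv']
  -- expand the Riemann tensor
  have hsplit : ∑ e, g x c e * riem n g ginv x a b e d
      = (∑ e, g x c e * pd (fun y => christoffel n g ginv y e b d) x a)
        - (∑ e, g x c e * pd (fun y => christoffel n g ginv y e a d) x b)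
        + (∑ e, g x c e * ∑ f, christoffel n g ginv x e a f * christoffel n g ginv x f b d)
        - (∑ e, g x c e * ∑ f, christoffel n g ginv x e b f * christoffel n g ginv x f a d) := by
    rw [← Finset.sum_sub_distrib, ← Finset.sum_add_distrib, ← Finset.sum_sub_distrib]
    unfold riem
    exact Finset.sum_congr rfl fun e _ => by ring
  rw [hsplit, key a b d, key b a d, hquad a b, hquad b a]
  have e1 : ∑ e, (gammaL n g x c a e + gammaL n g x e a c) * christoffel n g ginv x e b d
      = ∑ e, gammaL n g x c a e * christoffel n g ginv x e b d
        + ∑ e, gammaL n g x e a c * christoffel n g ginv x e b d := by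
    rw [← Finset.sum_add_distrib]
    exact Finset.sum_congr rfl fun e _ => by ring
  have e2 : ∑ e, (gammaL n g x c b e + gammaL n g x e b c) * christoffel n g ginv x e a d
      = ∑ e, gammaL n g x c b e * christoffel n g ginv x e a d
        + ∑ e, gammaL n g x e b c * christoffel n g ginv x e a d := by
    rw [← Finset.sum_add_distrib]
    exact Finset.sum_congr rfl fun e _ => by ring
  rw [e1, e2]
  unfold rl
  ring

theorem rl_antisym1 (x : Fin n → ℝ) (a b c d : Fin n) :
    rl n g ginv x a b c d = - rl n g ginv x b a c d := by
  unfold rl; ring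

include hgsmooth hginvsmooth hgsym hginvsym in
theorem rl_pairsym (x : Fin n → ℝ) (a b c d : Fin n) :
    rl n g ginv x a b c d = rl n g ginv x c d a b := by
  set P2 : Fin n → Fin n → Fin n → Fin n → ℝ :=
    fun w1 w2 p q => pd (fun y => pd (fun z => g z p q) y w2) x w1 with hP2
  have hdpd : ∀ (p q w : Fin n) (y : Fin n → ℝ),
      DifferentiableAt ℝ (fun z => pd (fun u => g u p q) z w) y :=
    fun p q w y => ((contDiff_pd (hgsmooth p q) w).differentiable (by simp)).differentiableAt
  have hgl : ∀ c' p q w, pd (fun y => gammaL n g y c' p q) x w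
      = (1/2) * (P2 w q c' p + P2 w p c' q - P2 w c' p q) := by
    intro c' p q w
    have h0 : (fun y => gammaL n g y c' p q)
        = fun y => (1/2 : ℝ) * (pd (fun z => g z c' p) y q + pd (fun z => g z c' q) y p
            - pd (fun z => g z p q) y c') := rfl
    rw [h0, pd_const_mul (((hdpd c' p q x).fun_add (hdpd c' q p x)).fun_sub (hdpd p q c' x)) _ w,
      pd_sub ((hdpd c' p q x).fun_add (hdpd c' q p x)) (hdpd p q c' x) w,
      pd_add (hdpd c' p q x) (hdpd c' q p x) w]
  have hcomm : ∀ w1 w2 p q, P2 w1 w2 p q = P2 w2 w1 p q :=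
    fun w1 w2 p q => pd_comm (hgsmooth p q) x w1 w2
  have hflip : ∀ w1 w2 p q, P2 w1 w2 p q = P2 w1 w2 q p :=
    fun w1 w2 p q => pd_congr (fun y => pd_congr (fun z => hgsym z p q) y w2) x w1
  have q1 : ∑ e, gammaL n g x e c a * christoffel n g ginv x e d b
      = ∑ e, gammaL n g x e a c * christoffel n g ginv x e b d :=
    Finset.sum_congr rfl fun e _ => by
      rw [gammaL_symm hgsym, christoffel_symm hgsym]
  have q2 : ∑ e, gammaL n g x e d a * christoffel n g ginv x e c b
      = ∑ e, gammaL n g x e b c * christoffel n g ginv x e a d := by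
    rw [quad_pairsym hginvsym]
    exact Finset.sum_congr rfl fun e _ => by
      rw [gammaL_symm hgsym, christoffel_symm hgsym]
  unfold rl
  rw [hgl c b d a, hgl c a d b, hgl a d b c, hgl a c b d, q1, q2,
    hcomm b a c d, hcomm c b a d, hcomm d c a b, hcomm c a d b, hcomm d b a c, hcomm d a c b,
    hflip a d c b, hflip b d c a, hflip a c d b]
  ring

include hgsmooth hginvsmooth hgsym hginvsym in
theorem rl_antisym2 (x : Fin n → ℝ) (a b c d : Fin n) :
    rl n g ginv x a b c d = - rl n g ginv x a b d c := by
  rw [rl_pairsym hgsmooth hginvsmooth hgsym hginvsym x a b c d, rl_antisym1,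
    ← rl_pairsym hgsmooth hginvsmooth hgsym hginvsym x a b d c]

include hgsmooth hginvsmooth hgsym hinv hinv' in
theorem raise_riem (x : Fin n → ℝ) (a b c d : Fin n) :
    riem n g ginv x a b c d = ∑ e, ginv x c e * rl n g ginv x a b e d := by
  symm
  have h : ∀ e, rl n g ginv x a b e d = ∑ f, g x e f * riem n g ginv x a b f d :=
    fun e => (lower_riem hgsmooth hginvsmooth hgsym hinv' x a b e d).symm
  calc ∑ e, ginv x c e * rl n g ginv x a b e d
      = ∑ e, ginv x c e * ∑ f, g x e f * riem n g ginv x a b f d :=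
        Finset.sum_congr rfl fun e _ => by rw [h e]
    _ = riem n g ginv x a b c d := contract2 hinv x c _

include hgsmooth hginvsmooth hgsym hinv hinv' in
theorem ricci_rl (x : Fin n → ℝ) (a b : Fin n) :
    ricci n g ginv x a b = ∑ c, ∑ e, ginv x c e * rl n g ginv x c a e b := by
  unfold ricci
  exact Finset.sum_congr rfl fun c _ =>
    raise_riem hgsmooth hginvsmooth hgsym hinv hinv' x c a c b

include hgsmooth hginvsmooth hgsym hginvsym hinv hinv' in
theorem ricci_contract (x : Fin n → ℝ) (a f : Fin n) :
    ∑ b, ∑ d, ginv x b d * rl n g ginv x a b f d = ricci n g ginv x f a := by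
  have step : ∀ b d, rl n g ginv x a b f d = rl n g ginv x d f b a := by
    intro b d
    rw [rl_pairsym hgsmooth hginvsmooth hgsym hginvsym x a b f d,
      rl_antisym2 hgsmooth hginvsmooth hgsym hginvsym x f d a b,
      rl_antisym1 x f d b a]
    ring
  calc ∑ b, ∑ d, ginv x b d * rl n g ginv x a b f d
      = ∑ b, ∑ d, ginv x b d * rl n g ginv x d f b a :=
        Finset.sum_congr rfl fun b _ => Finset.sum_congr rfl fun d _ => by rw [step b d]
    _ = ∑ d, ∑ b, ginv x b d * rl n g ginv x d f b a := Finset.sum_comm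
    _ = ∑ d, ∑ b, ginv x d b * rl n g ginv x d f b a :=
        Finset.sum_congr rfl fun d _ => Finset.sum_congr rfl fun b _ => by rw [hginvsym x b d]
    _ = ricci n g ginv x f a :=
        (ricci_rl hgsmooth hginvsmooth hgsym hinv hinv' x f a).symm

include hgsmooth hginvsmooth hgsym hginvsym hinv hinv' in
theorem ricci_symm (x : Fin n → ℝ) (a b : Fin n) :
    ricci n g ginv x a b = ricci n g ginv x b a := by
  rw [ricci_rl hgsmooth hginvsmooth hgsym hinv hinv' x a b,
    ricci_rl hgsmooth hginvsmooth hgsym hinv hinv' x b a]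
  calc ∑ c, ∑ e, ginv x c e * rl n g ginv x c a e b
      = ∑ c, ∑ e, ginv x c e * rl n g ginv x e b c a :=
        Finset.sum_congr rfl fun c _ => Finset.sum_congr rfl fun e _ => by
          rw [rl_pairsym hgsmooth hginvsmooth hgsym hginvsym x c a e b]
    _ = ∑ e, ∑ c, ginv x c e * rl n g ginv x e b c a := Finset.sum_comm
    _ = ∑ e, ∑ c, ginv x e c * rl n g ginv x e b c a :=
        Finset.sum_congr rfl fun e _ => Finset.sum_congr rfl fun c _ => by rw [hginvsym x c e]

include hgsmooth hginvsmooth hgsym hginvsym hinv hinv' in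
theorem riem_contract (x : Fin n → ℝ) (a c : Fin n) :
    ∑ b, ∑ d, riem n g ginv x a b c d * ginv x b d
      = ∑ f, ginv x c f * ricci n g ginv x a f := by
  calc ∑ b, ∑ d, riem n g ginv x a b c d * ginv x b d
      = ∑ b, ∑ d, ∑ f, ginv x c f * (ginv x b d * rl n g ginv x a b f d) := by
        refine Finset.sum_congr rfl fun b _ => Finset.sum_congr rfl fun d _ => ?_
        rw [raise_riem hgsmooth hginvsmooth hgsym hinv hinv' x a b c d, Finset.sum_mul]
        exact Finset.sum_congr rfl fun f _ => by ring
    _ = ∑ b, ∑ f, ∑ d, ginv x c f * (ginv x b d * rl n g ginv x a b f d) :=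
        Finset.sum_congr rfl fun b _ => Finset.sum_comm
    _ = ∑ f, ∑ b, ∑ d, ginv x c f * (ginv x b d * rl n g ginv x a b f d) := Finset.sum_comm
    _ = ∑ f, ginv x c f * ∑ b, ∑ d, ginv x b d * rl n g ginv x a b f d := by
        refine Finset.sum_congr rfl fun f _ => ?_
        rw [Finset.mul_sum]
        exact Finset.sum_congr rfl fun b _ => by rw [Finset.mul_sum]
    _ = ∑ f, ginv x c f * ricci n g ginv x f a :=
        Finset.sum_congr rfl fun f _ => by
          rw [ricci_contract hgsmooth hginvsmooth hgsym hginvsym hinv hinv' x a f]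
    _ = ∑ f, ginv x c f * ricci n g ginv x a f :=
        Finset.sum_congr rfl fun f _ => by
          rw [ricci_symm hgsmooth hginvsmooth hgsym hginvsym hinv hinv' x f a]

include hgsmooth hginvsmooth hgsym hginvsym hinv hinv' in
theorem weyl_trace (x : Fin n → ℝ) (a c : Fin n) :
    ∑ b, ∑ d, weyl n g ginv x a b c d * ginv x b d
      = ∑ f, ginv x c f * ricci n g ginv x a f
        + (1/((n:ℝ) - 1)) * ∑ f, ginv x c f * ricci n g ginv x a f
        - (if a = c then (∑ b, ∑ d, ricci n g ginv x b d * ginv x b d)/((n:ℝ)-1) else 0) := by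
  have hsplit : ∑ b, ∑ d, weyl n g ginv x a b c d * ginv x b d
      = (∑ b, ∑ d, riem n g ginv x a b c d * ginv x b d)
        - (∑ b, ∑ d, (if a = c then schouten n g ginv x b d else 0) * ginv x b d)
        + (∑ b, ∑ d, (if b = c then schouten n g ginv x a d else 0) * ginv x b d) := by
    rw [← Finset.sum_sub_distrib, ← Finset.sum_add_distrib]
    refine Finset.sum_congr rfl fun b _ => ?_
    rw [← Finset.sum_sub_distrib, ← Finset.sum_add_distrib]
    refine Finset.sum_congr rfl fun d _ => ?_
    unfold weyl; ring
  rw [hsplit, riem_contract hgsmooth hginvsmooth hgsym hginvsym hinv hinv' x a c]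
  have h2 : ∑ b, ∑ d, (if a = c then schouten n g ginv x b d else 0) * ginv x b d
      = if a = c then (∑ b, ∑ d, ricci n g ginv x b d * ginv x b d)/((n:ℝ)-1) else 0 := by
    by_cases h : a = c
    · simp only [h, if_true]
      rw [Finset.sum_div]
      refine Finset.sum_congr rfl fun b _ => ?_
      rw [Finset.sum_div]
      refine Finset.sum_congr rfl fun d _ => ?_
      unfold schouten; ring
    · simp [h]
  have h3 : ∑ b, ∑ d, (if b = c then schouten n g ginv x a d else 0) * ginv x b d
      = (1/((n:ℝ) - 1)) * ∑ f, ginv x c f * ricci n g ginv x a f := by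
    calc ∑ b, ∑ d, (if b = c then schouten n g ginv x a d else 0) * ginv x b d
        = ∑ b, (if b = c then ∑ d, schouten n g ginv x a d * ginv x b d else 0) := by
          refine Finset.sum_congr rfl fun b _ => ?_
          by_cases h : b = c
          · simp [h]
          · simp [h]
      _ = ∑ d, schouten n g ginv x a d * ginv x c d := by
          rw [Finset.sum_ite_eq' Finset.univ c
            (fun b => ∑ d, schouten n g ginv x a d * ginv x b d)]
          simp
      _ = (1/((n:ℝ) - 1)) * ∑ f, ginv x c f * ricci n g ginv x a f := by
          rw [Finset.mul_sum]
          refine Finset.sum_congr rfl fun d _ => ?_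
          unfold schouten; ring
  rw [h2, h3]
  ring

include hgsmooth hgsym hinv' in
theorem covD_proportional (σ : (Fin n → ℝ) → ℝ) (hσ : Differentiable ℝ σ)
    (hP : ∀ y b c, schouten n g ginv y b c = σ y * g y b c)
    (x : Fin n → ℝ) (a b d : Fin n) :
    covDSchouten n g ginv x a b d = pd σ x a * g x b d := by
  unfold covDSchouten
  have hgd : DifferentiableAt ℝ (fun y => g y b d) x :=
    ((hgsmooth b d).differentiable (by simp)).differentiableAt
  rw [pd_congr (fun y => hP y b d) x a, pd_mul (hσ x) hgd a]
  have h1 : ∑ e, christoffel n g ginv x e a b * schouten n g ginv x e d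
      = σ x * gammaL n g x d a b := by
    calc ∑ e, christoffel n g ginv x e a b * schouten n g ginv x e d
        = ∑ e, σ x * (g x d e * christoffel n g ginv x e a b) :=
          Finset.sum_congr rfl fun e _ => by rw [hP x e d, hgsym x e d]; ring
      _ = σ x * ∑ e, g x d e * christoffel n g ginv x e a b := (Finset.mul_sum _ _ _).symm
      _ = σ x * gammaL n g x d a b := by rw [lower_chr hinv' x d a b]
  have h2 : ∑ e, christoffel n g ginv x e a d * schouten n g ginv x b e
      = σ x * gammaL n g x b a d := by
    calc ∑ e, christoffel n g ginv x e a d * schouten n g ginv x b e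
        = ∑ e, σ x * (g x b e * christoffel n g ginv x e a d) :=
          Finset.sum_congr rfl fun e _ => by rw [hP x b e]; ring
      _ = σ x * ∑ e, g x b e * christoffel n g ginv x e a d := (Finset.mul_sum _ _ _).symm
      _ = σ x * gammaL n g x b a d := by rw [lower_chr hinv' x b a d]
  rw [h1, h2, compat hgsym x a b d]
  ring

end Alg

end Main

/-- For a pseudo-Riemannian metric `g` (in a chart `ℝⁿ`, `n ≥ 2`, with
smooth inverse `ginv`), the prolongation connection of the metrisability equation agrees
with the projective tractor connection on the section `(g^{bc}, ν^c, ρ)` determined by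
`t^{bc} = g^{bc}` — i.e. the difference `(0, (1/n) W_{ab}{}^c{}_d g^{bd},
−(2/n) C_{abd} g^{bd})` vanishes — if and only if `g` is Einstein. -/
theorem stmt_18 (n : ℕ) (hn : 2 ≤ n)
    (g ginv : (Fin n → ℝ) → Fin n → Fin n → ℝ)
    (hgsmooth : ∀ b c, ContDiff ℝ (⊤ : ℕ∞) fun x => g x b c)
    (hginvsmooth : ∀ b c, ContDiff ℝ (⊤ : ℕ∞) fun x => ginv x b c)
    (hgsym : ∀ x a b, g x a b = g x b a)
    (hginvsym : ∀ x a b, ginv x a b = ginv x b a)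
    (hinv : ∀ x a c, (∑ b, ginv x a b * g x b c) = if a = c then (1:ℝ) else 0)
    (hinv' : ∀ x a c, (∑ b, g x a b * ginv x b c) = if a = c then (1:ℝ) else 0) :
    ((∀ x a c, (1 / n) * (∑ b, ∑ d, weyl n g ginv x a b c d * ginv x b d) = 0)
      ∧ (∀ x a, (2 / n) * (∑ b, ∑ d, cotton n g ginv x a b d * ginv x b d) = 0))
    ↔ ∃ lam : ℝ, ∀ x a b, ricci n g ginv x a b = lam * g x a b := by
  have hn2 : (2:ℝ) ≤ (n:ℝ) := by exact_mod_cast hn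
  have hNne : (n:ℝ) ≠ 0 := by linarith
  have hN1pos : (0:ℝ) < (n:ℝ) - 1 := by linarith
  have hN1ne : (n:ℝ) - 1 ≠ 0 := ne_of_gt hN1pos
  have h1n : (1:ℝ)/(n:ℝ) ≠ 0 := one_div_ne_zero hNne
  have hgginv : ∀ x, ∑ b, ∑ d, g x b d * ginv x b d = (n:ℝ) := by
    intro x
    have h1 : ∀ b : Fin n, ∑ d, g x b d * ginv x b d = 1 := by
      intro b
      calc ∑ d, g x b d * ginv x b d = ∑ d, g x b d * ginv x d b :=
            Finset.sum_congr rfl fun d _ => by rw [hginvsym x b d]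
        _ = 1 := by rw [hinv' x b b]; simp
    rw [Finset.sum_congr rfl fun b _ => h1 b]
    simp
  have hdelta : ∀ x a b, ∑ d, g x a d * ginv x b d = if a = b then (1:ℝ) else 0 := by
    intro x a b
    calc ∑ d, g x a d * ginv x b d = ∑ d, g x a d * ginv x d b :=
          Finset.sum_congr rfl fun d _ => by rw [hginvsym x b d]
      _ = if a = b then 1 else 0 := hinv' x a b
  have hdelta2 : ∀ x c a, ∑ f, ginv x c f * g x a f = if c = a then (1:ℝ) else 0 := by
    intro x c a
    calc ∑ f, ginv x c f * g x a f = ∑ f, ginv x c f * g x f a :=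
          Finset.sum_congr rfl fun f _ => by rw [hgsym x a f]
      _ = if c = a then 1 else 0 := hinv x c a
  constructor
  · rintro ⟨Hw, Hc⟩
    have hW0 : ∀ (x : Fin n → ℝ) a c,
        ∑ b, ∑ d, weyl n g ginv x a b c d * ginv x b d = 0 := by
      intro x a c
      rcases mul_eq_zero.mp (Hw x a c) with h | h
      · exact absurd h h1n
      · exact h
    have hT : ∀ (x : Fin n → ℝ) a c, ∑ f, ginv x c f * ricci n g ginv x a f
        = if a = c then (∑ b, ∑ d, ricci n g ginv x b d * ginv x b d) / (n:ℝ) else 0 := by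
      intro x a c
      have h := (weyl_trace hgsmooth hginvsmooth hgsym hginvsym hinv hinv' x a c).symm.trans
        (hW0 x a c)
      by_cases hac : a = c
      · simp only [hac, if_true] at h ⊢
        generalize hTT : (∑ f, ginv x c f * ricci n g ginv x c f) = T at h ⊢
        generalize hSS : (∑ b, ∑ d, ricci n g ginv x b d * ginv x b d) = S at h ⊢
        rw [eq_div_iff hNne]
        field_simp at h
        linear_combination h
      · simp only [hac, if_false] at h ⊢
        generalize hTT : (∑ f, ginv x c f * ricci n g ginv x a f) = T at h ⊢
        field_simp at h
        have hTn : T * (n:ℝ) = 0 := by linear_combination h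
        rcases mul_eq_zero.mp hTn with h' | h'
        · exact h'
        · exact absurd h' hNne
    have hEin : ∀ (x : Fin n → ℝ) a e, ricci n g ginv x a e
        = ((∑ b, ∑ d, ricci n g ginv x b d * ginv x b d) / (n:ℝ)) * g x a e := by
      intro x a e
      have h1 : ∑ c, g x e c * ∑ f, ginv x c f * ricci n g ginv x a f
          = ricci n g ginv x a e := contract1 hinv' x e (fun f => ricci n g ginv x a f)
      rw [Finset.sum_congr rfl fun c _ => by rw [hT x a c]] at h1
      rw [← h1]
      rw [Finset.sum_congr rfl (fun c (_ : c ∈ Finset.univ) =>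
        mul_ite (a = c) (g x e c) ((∑ b, ∑ d, ricci n g ginv x b d * ginv x b d) / (n:ℝ)) 0)]
      simp only [mul_zero, Finset.sum_ite_eq, Finset.mem_univ, if_true]
      rw [hgsym x e a]
      ring
    set σ : (Fin n → ℝ) → ℝ := fun x =>
      (∑ b, ∑ d, ricci n g ginv x b d * ginv x b d) / ((n:ℝ) * ((n:ℝ) - 1)) with hσdef
    have hσsmooth : ContDiff ℝ (⊤ : ℕ∞) σ := by
      apply ContDiff.div_const
      exact ContDiff.sum fun b _ => ContDiff.sum fun d _ =>
        (contDiff_ricci hgsmooth hginvsmooth b d).mul (hginvsmooth b d)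
    have hσdiff : Differentiable ℝ σ := hσsmooth.differentiable (by simp)
    have hEinσ : ∀ (x : Fin n → ℝ) a e, ricci n g ginv x a e
        = (((n:ℝ) - 1) * σ x) * g x a e := by
      intro x a e
      rw [hEin x a e, hσdef]
      field_simp
    have hP : ∀ (y : Fin n → ℝ) b c, schouten n g ginv y b c = σ y * g y b c := by
      intro y b c
      unfold schouten
      rw [hEinσ y b c]
      field_simp
    have hCov : ∀ (x : Fin n → ℝ) a b d,
        covDSchouten n g ginv x a b d = pd σ x a * g x b d :=
      fun x a b d => covD_proportional hgsmooth hgsym hinv' σ hσdiff hP x a b d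
    have hctrace : ∀ (x : Fin n → ℝ) a,
        ∑ b, ∑ d, cotton n g ginv x a b d * ginv x b d = ((n:ℝ) - 1) * pd σ x a := by
      intro x a
      have hc : ∀ b d, cotton n g ginv x a b d
          = pd σ x a * g x b d - pd σ x b * g x a d := by
        intro b d
        unfold cotton
        rw [hCov x a b d, hCov x b a d]
      calc ∑ b, ∑ d, cotton n g ginv x a b d * ginv x b d
          = ∑ b, (pd σ x a * ∑ d, g x b d * ginv x b d
              - pd σ x b * ∑ d, g x a d * ginv x b d) := by
            refine Finset.sum_congr rfl fun b _ => ?_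
            rw [Finset.mul_sum, Finset.mul_sum, ← Finset.sum_sub_distrib]
            refine Finset.sum_congr rfl fun d _ => ?_
            rw [hc b d]; ring
        _ = ∑ b, (pd σ x a * ∑ d, g x b d * ginv x b d
              - pd σ x b * (if a = b then (1:ℝ) else 0)) := by
            refine Finset.sum_congr rfl fun b _ => ?_
            rw [hdelta x a b]
        _ = (∑ b, pd σ x a * ∑ d, g x b d * ginv x b d)
              - ∑ b, pd σ x b * (if a = b then (1:ℝ) else 0) := Finset.sum_sub_distrib _ _
        _ = ((n:ℝ) - 1) * pd σ x a := by
            rw [Finset.sum_congr rfl fun b (_ : b ∈ Finset.univ) => by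
              rw [show (∑ d, g x b d * ginv x b d) = 1 by
                calc ∑ d, g x b d * ginv x b d = ∑ d, g x b d * ginv x d b :=
                      Finset.sum_congr rfl fun d _ => by rw [hginvsym x b d]
                  _ = 1 := by rw [hinv' x b b]; simp]]
            simp only [mul_one, Finset.sum_const, Finset.card_univ, Fintype.card_fin,
              nsmul_eq_mul, mul_ite, mul_zero, mul_one, Finset.sum_ite_eq,
              Finset.mem_univ, if_true]
            ring
    have hpd0 : ∀ (x : Fin n → ℝ) a, pd σ x a = 0 := by
      intro x a
      have h := Hc x a
      rw [hctrace x a] at h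
      have h2n : (2:ℝ)/(n:ℝ) ≠ 0 := div_ne_zero two_ne_zero hNne
      rcases mul_eq_zero.mp h with h' | h'
      · exact absurd h' h2n
      · rcases mul_eq_zero.mp h' with h'' | h''
        · exact absurd h'' hN1ne
        · exact h''
    have hfz : ∀ x : Fin n → ℝ, fderiv ℝ σ x = 0 := by
      intro x
      apply ContinuousLinearMap.ext
      intro v
      have hv : v = ∑ a, v a • (Pi.single a 1 : Fin n → ℝ) := by
        funext j
        simp [Finset.sum_apply, Pi.single_apply]
      rw [ContinuousLinearMap.zero_apply, hv, map_sum]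
      refine Finset.sum_eq_zero fun a _ => ?_
      rw [map_smul]
      have hz := hpd0 x a
      unfold pd at hz
      rw [hz, smul_zero]
    have hconst : ∀ x : Fin n → ℝ, σ x = σ 0 := fun x =>
      is_const_of_fderiv_eq_zero hσdiff hfz x 0
    refine ⟨((n:ℝ) - 1) * σ 0, fun x a b => ?_⟩
    rw [hEinσ x a b, hconst x]
  · rintro ⟨lam, hE⟩
    have hP : ∀ (y : Fin n → ℝ) b c,
        schouten n g ginv y b c = (lam/((n:ℝ)-1)) * g y b c := by
      intro y b c
      unfold schouten
      rw [hE y b c]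
      ring
    have hCov : ∀ (x : Fin n → ℝ) a b d, covDSchouten n g ginv x a b d = 0 := by
      intro x a b d
      rw [covD_proportional hgsmooth hgsym hinv' (fun _ => lam/((n:ℝ)-1))
        (differentiable_const _) hP x a b d, pd_const, zero_mul]
    constructor
    · intro x a c
      rw [weyl_trace hgsmooth hginvsmooth hgsym hginvsym hinv hinv' x a c]
      have hTf : ∑ f, ginv x c f * ricci n g ginv x a f
          = lam * (if c = a then (1:ℝ) else 0) := by
        calc ∑ f, ginv x c f * ricci n g ginv x a f
            = ∑ f, lam * (ginv x c f * g x a f) :=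
              Finset.sum_congr rfl fun f _ => by rw [hE x a f]; ring
          _ = lam * ∑ f, ginv x c f * g x a f := (Finset.mul_sum _ _ _).symm
          _ = lam * (if c = a then (1:ℝ) else 0) := by rw [hdelta2 x c a]
      have hS : ∑ b, ∑ d, ricci n g ginv x b d * ginv x b d = lam * (n:ℝ) := by
        calc ∑ b, ∑ d, ricci n g ginv x b d * ginv x b d
            = ∑ b, ∑ d, lam * (g x b d * ginv x b d) :=
              Finset.sum_congr rfl fun b _ => Finset.sum_congr rfl fun d _ => by
                rw [hE x b d]; ring
          _ = lam * ∑ b, ∑ d, g x b d * ginv x b d := by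
              rw [Finset.mul_sum]
              refine Finset.sum_congr rfl fun b _ => ?_
              rw [Finset.mul_sum]
          _ = lam * (n:ℝ) := by rw [hgginv x]
      rw [hTf, hS]
      by_cases hac : a = c
      · subst hac
        simp only [↓reduceIte]
        field_simp
        ring
      · have hca : ¬ c = a := fun h => hac h.symm
        simp [hac, hca]
    · intro x a
      have hz : ∑ b, ∑ d, cotton n g ginv x a b d * ginv x b d = 0 :=
        Finset.sum_eq_zero fun b _ => Finset.sum_eq_zero fun d _ => by
          unfold cotton
          rw [hCov, hCov]
          ring
      rw [hz, mul_zero]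

end Stmt18
end
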